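/- arXiv:2401.13125 — 6 statements merged into one kernel-verified Lean document; each statement's English description precedes it below -/
import Mathlib

section
/- Let β > 0, let η : ℝ × ℝ^d → ℝ be a smooth function with η(t,x) > 0 satisfying the backward heat equation ∂_t η = −β⁻¹ Δ_x η, and let η̂ : ℝ × ℝ^d → ℝ be a smooth function satisfying the forward heat equation ∂_t η̂ = β⁻¹ Δ_x η̂. Define ρ(t,x) = η(t,x) η̂(t,x) and Φ(t,x) = 2β⁻¹ log η(t,x). Then ρ satisfies the Fokker–Planck-type continuity equation ∂_t ρ(t,x) + ∇_x · (ρ(t,x) ∇_x Φ(t,x)) = β⁻¹ Δ_x ρ(t,x) for all (t,x). -/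
/-- Partial derivative of `f : ℝ^d → ℝ` in the `i`-th coordinate direction. -/
noncomputable def pd {d : ℕ} (i : Fin d) (f : (Fin d → ℝ) → ℝ) (x : Fin d → ℝ) : ℝ :=
  fderiv ℝ f x (Pi.single i 1)

/-- Laplacian of `f : ℝ^d → ℝ`. -/
noncomputable def lap {d : ℕ} (f : (Fin d → ℝ) → ℝ) (x : Fin d → ℝ) : ℝ :=
  ∑ i, pd i (pd i f) x

lemma contDiff_pd {d : ℕ} (i : Fin d) {f : (Fin d → ℝ) → ℝ} (hf : ContDiff ℝ (⊤ : ℕ∞) f) :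
    ContDiff ℝ (⊤ : ℕ∞) (pd i f) :=
  (hf.fderiv_right (by simp)).clm_apply contDiff_const

lemma pd_mul {d : ℕ} (i : Fin d) {f g : (Fin d → ℝ) → ℝ} {x : Fin d → ℝ}
    (hf : DifferentiableAt ℝ f x) (hg : DifferentiableAt ℝ g x) :
    pd i (fun y => f y * g y) x = pd i f x * g x + f x * pd i g x := by
  unfold pd
  rw [fderiv_fun_mul hf hg]
  simp only [ContinuousLinearMap.add_apply, ContinuousLinearMap.smul_apply, smul_eq_mul]
  ring

lemma pd_add {d : ℕ} (i : Fin d) {f g : (Fin d → ℝ) → ℝ} {x : Fin d → ℝ}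
    (hf : DifferentiableAt ℝ f x) (hg : DifferentiableAt ℝ g x) :
    pd i (fun y => f y + g y) x = pd i f x + pd i g x := by
  unfold pd
  rw [fderiv_fun_add hf hg]; simp

lemma pd_const_mul {d : ℕ} (i : Fin d) (c : ℝ) {f : (Fin d → ℝ) → ℝ} {x : Fin d → ℝ}
    (hf : DifferentiableAt ℝ f x) :
    pd i (fun y => c * f y) x = c * pd i f x := by
  unfold pd
  rw [fderiv_const_mul hf]; simp

/-- Hopf–Cole factorization: if `η > 0` is smooth and solves the backward
heat equation `∂_t η = -β⁻¹ Δ_x η`, and `η̂` is smooth and solves the forward heat equation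
`∂_t η̂ = β⁻¹ Δ_x η̂`, then `ρ = η η̂` solves the Fokker–Planck-type continuity equation
`∂_t ρ + ∇_x · (ρ ∇_x Φ) = β⁻¹ Δ_x ρ` with `Φ = 2β⁻¹ log η`. -/
theorem hopf_cole_continuity_equation {d : ℕ} (β : ℝ) (hβ : 0 < β)
    (η ηhat : ℝ → (Fin d → ℝ) → ℝ)
    (hη_smooth : ContDiff ℝ (⊤ : ℕ∞) (fun p : ℝ × (Fin d → ℝ) => η p.1 p.2))
    (hηhat_smooth : ContDiff ℝ (⊤ : ℕ∞) (fun p : ℝ × (Fin d → ℝ) => ηhat p.1 p.2))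
    (hpos : ∀ t x, 0 < η t x)
    (hbackward : ∀ t x, deriv (fun s => η s x) t = -β⁻¹ * lap (η t) x)
    (hforward : ∀ t x, deriv (fun s => ηhat s x) t = β⁻¹ * lap (ηhat t) x)
    (ρ Φ : ℝ → (Fin d → ℝ) → ℝ)
    (hρ : ∀ t x, ρ t x = η t x * ηhat t x)
    (hΦ : ∀ t x, Φ t x = 2 * β⁻¹ * Real.log (η t x)) :
    ∀ t x, deriv (fun s => ρ s x) t
        + (∑ i, pd i (fun y => ρ t y * pd i (Φ t) y) x)
      = β⁻¹ * lap (ρ t) x := by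
  intro t x
  -- smoothness in x
  have hfs : ContDiff ℝ (⊤ : ℕ∞) (η t) := hη_smooth.comp (contDiff_const.prodMk contDiff_id)
  have hgs : ContDiff ℝ (⊤ : ℕ∞) (ηhat t) := hηhat_smooth.comp (contDiff_const.prodMk contDiff_id)
  have hfd : Differentiable ℝ (η t) := hfs.differentiable (by simp)
  have hgd : Differentiable ℝ (ηhat t) := hgs.differentiable (by simp)
  have hpdf : ∀ i : Fin d, Differentiable ℝ (pd i (η t)) :=
    fun i => (contDiff_pd i hfs).differentiable (by simp)
  have hpdg : ∀ i : Fin d, Differentiable ℝ (pd i (ηhat t)) :=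
    fun i => (contDiff_pd i hgs).differentiable (by simp)
  -- time derivative
  have hdt : deriv (fun s => ρ s x) t
      = (-β⁻¹ * lap (η t) x) * ηhat t x + η t x * (β⁻¹ * lap (ηhat t) x) := by
    have heq : (fun s => ρ s x) = fun s => η s x * ηhat s x := funext fun s => hρ s x
    have hft : DifferentiableAt ℝ (fun s => η s x) t :=
      ((hη_smooth.comp (contDiff_id.prodMk contDiff_const)).differentiable (by simp)) t
    have hgt : DifferentiableAt ℝ (fun s => ηhat s x) t :=
      ((hηhat_smooth.comp (contDiff_id.prodMk contDiff_const)).differentiable (by simp)) t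
    rw [heq, deriv_fun_mul hft hgt, hbackward, hforward]
  -- derivative of Φ
  have hΦi : ∀ (i : Fin d) (y : Fin d → ℝ),
      pd i (Φ t) y = 2 * β⁻¹ * ((η t y)⁻¹ * pd i (η t) y) := by
    intro i y
    have hΦeq : Φ t = fun y => 2 * β⁻¹ * Real.log (η t y) := funext fun y => hΦ t y
    have hder : HasFDerivAt (η t) (fderiv ℝ (η t) y) y := (hfd y).hasFDerivAt
    have hlog := (hder.log (hpos t y).ne').const_mul (2 * β⁻¹)
    rw [hΦeq]
    unfold pd
    rw [hlog.fderiv]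
    simp [smul_smul, mul_assoc]
  -- the divergence term
  have hdiv : ∀ i : Fin d,
      pd i (fun y => ρ t y * pd i (Φ t) y) x
        = 2 * β⁻¹ * (pd i (ηhat t) x * pd i (η t) x + ηhat t x * pd i (pd i (η t)) x) := by
    intro i
    have hinner : (fun y => ρ t y * pd i (Φ t) y)
        = fun y => 2 * β⁻¹ * (ηhat t y * pd i (η t) y) := by
      funext y
      have h0 : η t y ≠ 0 := (hpos t y).ne'
      rw [hρ, hΦi]
      field_simp
    rw [hinner, pd_const_mul i _ (f := fun y => ηhat t y * pd i (η t) y) ((hgd x).mul (hpdf i x)),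
      pd_mul i (hgd x) (hpdf i x)]
  -- the laplacian of ρ
  have hlapρ : lap (ρ t) x
      = ∑ i : Fin d, (pd i (pd i (η t)) x * ηhat t x + pd i (η t) x * pd i (ηhat t) x
          + (pd i (η t) x * pd i (ηhat t) x + η t x * pd i (pd i (ηhat t)) x)) := by
    have hρeq : ρ t = fun y => η t y * ηhat t y := funext fun y => hρ t y
    unfold lap
    refine Finset.sum_congr rfl fun i _ => ?_
    have h1 : pd i (ρ t) = fun y => pd i (η t) y * ηhat t y + η t y * pd i (ηhat t) y := by
      funext y
      rw [hρeq, pd_mul i (hfd y) (hgd y)]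
    rw [h1, pd_add i (f := fun y => pd i (η t) y * ηhat t y) (g := fun y => η t y * pd i (ηhat t) y) ((hpdf i x).mul (hgd x)) ((hfd x).mul (hpdg i x)),
      pd_mul i (hpdf i x) (hgd x), pd_mul i (hfd x) (hpdg i x)]
  rw [hdt, hlapρ, Finset.sum_congr rfl fun i _ => hdiv i]
  unfold lap
  simp only [Finset.mul_sum, Finset.sum_mul]
  rw [← Finset.sum_add_distrib, ← Finset.sum_add_distrib]
  exact Finset.sum_congr rfl fun i _ => by ring
end

section
/- Let σ > 0, β ≥ 1, and T, h ∈ [0, σ²/4]. For ζ > 0 with β^{1/2} ζ ∈ [σ/2, 3σ/2], define f(ζ) := 1 − h[σ⁻² + β⁻¹(1 + σ⁻²T)² · (3T²β⁻²/ζ² + ζ² − 2Tβ⁻¹(1 + σ⁻²T)) / (ζ² − T²β⁻²/ζ² + 2Tβ⁻¹(1 + σ⁻²T))²]. Then |f(ζ)| ≤ 1 − h/σ². -/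
set_option maxHeartbeats 1600000


/-- Lemma 4.2 of the paper: contraction estimate for the derivative of the
fixed-point iteration function governing the standard-deviation evolution of TT-BRWP. -/
theorem ttbrwp_contraction_estimate (σ β T h ζ : ℝ) (hσ : 0 < σ) (hβ : 1 ≤ β)
    (hT : T ∈ Set.Icc 0 (σ ^ 2 / 4)) (hh : h ∈ Set.Icc 0 (σ ^ 2 / 4))
    (hζ : 0 < ζ) (hζmem : Real.sqrt β * ζ ∈ Set.Icc (σ / 2) (3 * σ / 2)) :
    |1 - h * ((σ ^ 2)⁻¹ + β⁻¹ * (1 + (σ ^ 2)⁻¹ * T) ^ 2 *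
        ((3 * T ^ 2 * (β ^ 2)⁻¹ / ζ ^ 2 + ζ ^ 2 - 2 * T * β⁻¹ * (1 + (σ ^ 2)⁻¹ * T)) /
          (ζ ^ 2 - T ^ 2 * (β ^ 2)⁻¹ / ζ ^ 2 + 2 * T * β⁻¹ * (1 + (σ ^ 2)⁻¹ * T)) ^ 2))|
      ≤ 1 - h / σ ^ 2 := by
  obtain ⟨hT0, hT1⟩ := hT
  obtain ⟨hh0, hh1⟩ := hh
  obtain ⟨hm1, hm2⟩ := hζmem
  have hβ0 : (0:ℝ) < β := lt_of_lt_of_le one_pos hβ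
  have hβne : β ≠ 0 := ne_of_gt hβ0
  have hσne : σ ≠ 0 := ne_of_gt hσ
  have hζne : ζ ≠ 0 := ne_of_gt hζ
  have hσ2 : (0:ℝ) < σ ^ 2 := by positivity
  have hζ2 : (0:ℝ) < ζ ^ 2 := by positivity
  have spos : (0:ℝ) < β * ζ ^ 2 := by positivity
  -- bound on βζ²
  have hsq : Real.sqrt β * ζ * (Real.sqrt β * ζ) = β * ζ ^ 2 := by
    rw [mul_mul_mul_comm, Real.mul_self_sqrt hβ0.le]; ring
  have ha0 : 0 ≤ Real.sqrt β * ζ := le_trans (by positivity) hm1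
  have hs1' : σ ^ 2 / 4 ≤ β * ζ ^ 2 := by
    have := mul_le_mul hm1 hm1 (by positivity) ha0
    rw [hsq] at this; nlinarith
  -- abbreviations
  set P : ℝ := 1 + (σ ^ 2)⁻¹ * T with hPdef
  have hPσ : σ ^ 2 * P = σ ^ 2 + T := by
    rw [hPdef]; field_simp
  have hP1 : 1 ≤ P := by
    rw [hPdef]
    have : 0 ≤ (σ ^ 2)⁻¹ * T := by positivity
    linarith
  have hP2 : P ≤ 5 / 4 := by
    have key : σ ^ 2 * P ≤ σ ^ 2 * (5 / 4) := by rw [hPσ]; nlinarith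
    exact le_of_mul_le_mul_left key hσ2
  have hTs : T ≤ β * ζ ^ 2 := le_trans hT1 hs1'
  set N : ℝ := 3 * T ^ 2 + β ^ 2 * ζ ^ 4 - 2 * T * P * (β * ζ ^ 2) with hNdef
  set Dd : ℝ := β ^ 2 * ζ ^ 4 - T ^ 2 + 2 * T * P * (β * ζ ^ 2) with hDdef
  have hN0 : 0 ≤ N := by
    rw [hNdef]
    nlinarith [sq_nonneg (β * ζ ^ 2 - T * P), mul_nonneg (sq_nonneg T) (by nlinarith : (0:ℝ) ≤ 3 - P ^ 2)]
  have hDd0 : (0:ℝ) < Dd := by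
    rw [hDdef]
    nlinarith [mul_nonneg hT0 (sub_nonneg.2 hTs),
      mul_nonneg (mul_nonneg hT0 (sub_nonneg.2 hP1)) spos.le, mul_pos spos spos]
  have hDdne : Dd ≠ 0 := ne_of_gt hDd0
  have h1 : N ≤ Dd := by
    rw [hNdef, hDdef]
    nlinarith [mul_nonneg hT0 (sub_nonneg.2 hTs),
      mul_nonneg (mul_nonneg hT0 (sub_nonneg.2 hP1)) spos.le]
  have h2 : β * ζ ^ 2 * (β * ζ ^ 2 + T) ≤ Dd := by
    rw [hDdef]
    nlinarith [mul_nonneg hT0 (sub_nonneg.2 hTs),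
      mul_nonneg (mul_nonneg hT0 (sub_nonneg.2 hP1)) spos.le]
  have h3 : σ ^ 2 * P ^ 2 ≤ 6 * (β * ζ ^ 2 + T) := by
    have hPσ2 : (σ ^ 2 * P) ^ 2 = (σ ^ 2 + T) ^ 2 := by rw [hPσ]
    have key : σ ^ 2 * (σ ^ 2 * P ^ 2) ≤ σ ^ 2 * (6 * (β * ζ ^ 2 + T)) := by
      nlinarith [hPσ2, mul_le_mul_of_nonneg_left hs1' hσ2.le,
        mul_self_le_mul_self hT0 hT1, mul_nonneg hT0 hσ2.le]
    exact le_of_mul_le_mul_left key hσ2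
  -- rewrite num and den
  have hnum_eq : 3 * T ^ 2 * (β ^ 2)⁻¹ / ζ ^ 2 + ζ ^ 2 - 2 * T * β⁻¹ * P = N / (β ^ 2 * ζ ^ 2) := by
    rw [hNdef]; field_simp
  have hden_eq : ζ ^ 2 - T ^ 2 * (β ^ 2)⁻¹ / ζ ^ 2 + 2 * T * β⁻¹ * P = Dd / (β ^ 2 * ζ ^ 2) := by
    rw [hDdef]; field_simp
  have hE_eq : β⁻¹ * P ^ 2 *
      ((3 * T ^ 2 * (β ^ 2)⁻¹ / ζ ^ 2 + ζ ^ 2 - 2 * T * β⁻¹ * P) /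
        (ζ ^ 2 - T ^ 2 * (β ^ 2)⁻¹ / ζ ^ 2 + 2 * T * β⁻¹ * P) ^ 2)
      = P ^ 2 * (β * ζ ^ 2) * N / Dd ^ 2 := by
    rw [hnum_eq, hden_eq]
    field_simp
  have hE0 : 0 ≤ β⁻¹ * P ^ 2 *
      ((3 * T ^ 2 * (β ^ 2)⁻¹ / ζ ^ 2 + ζ ^ 2 - 2 * T * β⁻¹ * P) /
        (ζ ^ 2 - T ^ 2 * (β ^ 2)⁻¹ / ζ ^ 2 + 2 * T * β⁻¹ * P) ^ 2) := by
    rw [hE_eq]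
    have : 0 ≤ P ^ 2 * (β * ζ ^ 2) * N := by
      exact mul_nonneg (mul_nonneg (sq_nonneg _) spos.le) hN0
    exact div_nonneg this (sq_nonneg _)
  have hE6 : β⁻¹ * P ^ 2 *
      ((3 * T ^ 2 * (β ^ 2)⁻¹ / ζ ^ 2 + ζ ^ 2 - 2 * T * β⁻¹ * P) /
        (ζ ^ 2 - T ^ 2 * (β ^ 2)⁻¹ / ζ ^ 2 + 2 * T * β⁻¹ * P) ^ 2) ≤ 6 / σ ^ 2 := by
    rw [hE_eq, div_le_div_iff₀ (by positivity) hσ2]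
    have hbzn : 0 ≤ β * ζ ^ 2 * N := mul_nonneg spos.le hN0
    have c1 : σ ^ 2 * P ^ 2 * (β * ζ ^ 2 * N) ≤ 6 * (β * ζ ^ 2 + T) * (β * ζ ^ 2 * N) :=
      mul_le_mul_of_nonneg_right h3 hbzn
    have c2 : β * ζ ^ 2 * (β * ζ ^ 2 + T) * N ≤ Dd * N := mul_le_mul_of_nonneg_right h2 hN0
    have c3 : Dd * N ≤ Dd * Dd := mul_le_mul_of_nonneg_left h1 hDd0.le
    nlinarith [c1, c2, c3]
  set E : ℝ := β⁻¹ * P ^ 2 *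
      ((3 * T ^ 2 * (β ^ 2)⁻¹ / ζ ^ 2 + ζ ^ 2 - 2 * T * β⁻¹ * P) /
        (ζ ^ 2 - T ^ 2 * (β ^ 2)⁻¹ / ζ ^ 2 + 2 * T * β⁻¹ * P) ^ 2) with hEdef
  clear_value E
  have hinv : (σ ^ 2)⁻¹ * σ ^ 2 = 1 := inv_mul_cancel₀ (ne_of_gt hσ2)
  have hh4 : h * (σ ^ 2)⁻¹ ≤ σ ^ 2 / 4 * (σ ^ 2)⁻¹ :=
    mul_le_mul_of_nonneg_right hh1 (inv_nonneg.mpr hσ2.le)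
  have hE6' : E ≤ 6 * (σ ^ 2)⁻¹ := by rw [← div_eq_mul_inv]; exact hE6
  have hhe : h * E ≤ h * (6 * (σ ^ 2)⁻¹) := mul_le_mul_of_nonneg_left hE6' hh0
  have hhe0 : 0 ≤ h * E := mul_nonneg hh0 hE0
  rw [div_eq_mul_inv, abs_le]
  constructor
  · linarith only [hhe, hh4, hinv, hhe0]
  · linarith only [hhe0]
end

section
/- Let σ > 0, β > 0, T ≥ 0, and h ∈ ℝ. Define the iterative function φ(ζ) := (1 − hσ⁻² + hβ⁻¹(1 + σ⁻²T)² / (ζ² − T²β⁻²/ζ² + 2Tβ⁻¹(1 + σ⁻²T))) ζ for ζ > 0. Then ζ* = σ/√β is a fixed point of φ, i.e. φ(σ/√β) = σ/√β; in particular the denominator ζ*² − T²β⁻²/ζ*² + 2Tβ⁻¹(1 + σ⁻²T) equals β⁻¹(σ + T/σ)² > 0. -/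
/-- `ζ* = σ/√β` is a fixed point of the TT-BRWP standard-deviation
iteration map `φ`, and the denominator at `ζ*` equals `β⁻¹(σ + T/σ)² > 0`. -/
theorem ttbrwp_fixed_point (σ β T h : ℝ) (hσ : 0 < σ) (hβ : 0 < β) (hT : 0 ≤ T)
    (φ : ℝ → ℝ)
    (hφ : ∀ ζ : ℝ, 0 < ζ → φ ζ =
      (1 - h * (σ ^ 2)⁻¹ + h * β⁻¹ * (1 + (σ ^ 2)⁻¹ * T) ^ 2 /
        (ζ ^ 2 - T ^ 2 * (β ^ 2)⁻¹ / ζ ^ 2 + 2 * T * β⁻¹ * (1 + (σ ^ 2)⁻¹ * T))) * ζ) :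
    φ (σ / Real.sqrt β) = σ / Real.sqrt β ∧
    (σ / Real.sqrt β) ^ 2 - T ^ 2 * (β ^ 2)⁻¹ / (σ / Real.sqrt β) ^ 2
        + 2 * T * β⁻¹ * (1 + (σ ^ 2)⁻¹ * T) = β⁻¹ * (σ + T / σ) ^ 2 ∧
    0 < β⁻¹ * (σ + T / σ) ^ 2 := by
  have hs : Real.sqrt β > 0 := Real.sqrt_pos.mpr hβ
  have hζ : 0 < σ / Real.sqrt β := div_pos hσ hs
  have hsq : (σ / Real.sqrt β) ^ 2 = σ ^ 2 / β := by
    rw [div_pow, Real.sq_sqrt hβ.le]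
  have hden : (σ / Real.sqrt β) ^ 2 - T ^ 2 * (β ^ 2)⁻¹ / (σ / Real.sqrt β) ^ 2
      + 2 * T * β⁻¹ * (1 + (σ ^ 2)⁻¹ * T) = β⁻¹ * (σ + T / σ) ^ 2 := by
    rw [hsq]
    field_simp
    ring
  have hpos : 0 < β⁻¹ * (σ + T / σ) ^ 2 := by
    have : 0 < σ + T / σ := by positivity
    positivity
  refine ⟨?_, hden, hpos⟩
  rw [hφ _ hζ, hden]
  have h1 : (1 + (σ ^ 2)⁻¹ * T) ^ 2 = ((σ + T / σ) / σ) ^ 2 := by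
    field_simp
  rw [h1]
  have hne : (σ + T / σ) ≠ 0 := by positivity
  field_simp
  ring
end

section
/- Let σ > 0, β ≥ 1, and T, h ∈ [0, σ²/4] with h > 0. Define the iterative function φ(ζ) := (1 − hσ⁻² + hβ⁻¹(1 + σ⁻²T)² / (ζ² − T²β⁻²/ζ² + 2Tβ⁻¹(1 + σ⁻²T))) ζ for ζ > 0. Let (σ_k)_{k≥0} be defined by σ_{k+1} = φ(σ_k), where the initial value satisfies |β^{1/2} σ_0 − σ| ≤ σ/2. Then for all k ≥ 0, |σ_k − σ/√β| ≤ (1 − h/σ²)^k |σ_0 − σ/√β|; in particular σ_k converges linearly to σ/√β. -/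
set_option maxHeartbeats 1600000 in
/-- Contraction step for the TT-BRWP standard-deviation iteration. -/
lemma ttbrwp_key_step (σ β T h s ζ : ℝ) (hσ : 0 < σ) (hβ0 : 0 < β)
    (hT0 : 0 ≤ T) (hT4 : T ≤ σ ^ 2 / 4) (hh0 : 0 < h) (hh4 : h ≤ σ ^ 2 / 4)
    (hs0 : 0 < s) (hσ2 : σ ^ 2 = β * s ^ 2) (hζ : |ζ - s| ≤ s / 2) :
    |(1 - h * (σ ^ 2)⁻¹ + h * β⁻¹ * (1 + (σ ^ 2)⁻¹ * T) ^ 2 /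
        (ζ ^ 2 - T ^ 2 * (β ^ 2)⁻¹ / ζ ^ 2 + 2 * T * β⁻¹ * (1 + (σ ^ 2)⁻¹ * T))) * ζ - s|
      ≤ (1 - h / σ ^ 2) * |ζ - s| := by
  rw [abs_le] at hζ
  have hζlo : s / 2 ≤ ζ := by linarith [hζ.1]
  have hζhi : ζ ≤ 3 * s / 2 := by linarith [hζ.2]
  have hζ0 : 0 < ζ := lt_of_lt_of_le (by linarith) hζlo
  have hsz : s ≤ 2 * ζ := by linarith
  have hζs : ζ ^ 2 ≤ s * ζ + s ^ 2 := by nlinarith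
  rw [hσ2] at hT4 hh4 ⊢
  have hβζ : β * s ^ 2 / 4 ≤ β * ζ ^ 2 := by
    have h1 : s / 2 * (s / 2) ≤ ζ * ζ := mul_self_le_mul_self (by positivity) hζlo
    nlinarith [mul_le_mul_of_nonneg_left h1 hβ0.le]
  have hTβζ : T ≤ β * ζ ^ 2 := le_trans hT4 hβζ
  set P : ℝ := β^2*(β*s^2)*ζ^4 - T^2*(β*s^2) + 2*T*β*ζ^2*(β*s^2) + 2*T^2*β*ζ^2 with hPdef
  set Q : ℝ := β*ζ*(ζ+s)*(β*(β*s^2)*ζ^2 + T^2) with hQdef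
  have hTsq : T * T ≤ (β * ζ ^ 2) * (β * ζ ^ 2) := mul_self_le_mul_self hT0 hTβζ
  have hP0 : 0 < P := by
    rcases eq_or_lt_of_le hT0 with hTz | hTpos
    · rw [hPdef, ← hTz]
      ring_nf
      positivity
    · have h1 : 0 < 2*T*β*ζ^2*(β*s^2) := by positivity
      nlinarith [mul_nonneg (mul_nonneg hβ0.le (sq_nonneg s)) (sub_nonneg.2 hTsq)]
  have hβsζ : 2 * T ≤ β * s * ζ := by nlinarith [mul_pos hβ0 hs0]
  have hPQ : P ≤ Q := by
    nlinarith [mul_nonneg (mul_nonneg (mul_nonneg (mul_nonneg hβ0.le hβ0.le) (sq_nonneg s))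
        (sq_nonneg ζ)) (sub_nonneg.2 hβsζ),
      mul_nonneg (sq_nonneg T) (sub_nonneg.2 (by nlinarith : β*ζ^2 ≤ β*s*ζ + β*s^2))]
  have hQ7 : Q ≤ 7 * P := by
    nlinarith [mul_nonneg (mul_nonneg (mul_nonneg (mul_nonneg hβ0.le hβ0.le)
        (mul_nonneg hβ0.le (sq_nonneg s))) (pow_nonneg hζ0.le 3)) (sub_nonneg.2 hsz),
      mul_nonneg (mul_nonneg (mul_nonneg (sq_nonneg T) hβ0.le) hζ0.le) (sub_nonneg.2 hsz),
      mul_nonneg (mul_nonneg hT0 (mul_nonneg hβ0.le (sq_nonneg s))) (sub_nonneg.2 hTβζ)]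
  have hQup : h * Q ≤ (2 * (β * s ^ 2) - h) * P := by
    nlinarith [mul_nonneg hh0.le (sub_nonneg.2 hQ7),
      mul_nonneg (by nlinarith : (0:ℝ) ≤ 2*(β*s^2) - 8*h) hP0.le]
  have hDval : ζ ^ 2 - T ^ 2 * (β ^ 2)⁻¹ / ζ ^ 2 + 2 * T * β⁻¹ * (1 + (β * s ^ 2)⁻¹ * T)
      = P / (β ^ 2 * ζ ^ 2 * (β * s ^ 2)) := by
    rw [hPdef]
    field_simp
    ring
  have hD0 : ζ ^ 2 - T ^ 2 * (β ^ 2)⁻¹ / ζ ^ 2 + 2 * T * β⁻¹ * (1 + (β * s ^ 2)⁻¹ * T) ≠ 0 := by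
    rw [hDval]
    positivity
  have hid : (1 - h * (β * s ^ 2)⁻¹ + h * β⁻¹ * (1 + (β * s ^ 2)⁻¹ * T) ^ 2 /
        (ζ ^ 2 - T ^ 2 * (β ^ 2)⁻¹ / ζ ^ 2 + 2 * T * β⁻¹ * (1 + (β * s ^ 2)⁻¹ * T))) * ζ - s
      = (ζ - s) * (1 - h * Q / ((β * s ^ 2) * P)) := by
    rw [hDval, div_div_eq_mul_div]
    field_simp [hP0.ne']
    rw [hPdef, hQdef]
    ring
  have hσ2P : 0 < (β * s ^ 2) * P := by positivity
  have hW : |1 - h * Q / ((β * s ^ 2) * P)| ≤ 1 - h / (β * s ^ 2) := by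
    rw [abs_le]
    constructor
    · have h1 : h * Q / ((β * s ^ 2) * P) ≤ 2 - h / (β * s ^ 2) := by
        rw [div_le_iff₀ hσ2P]
        have hexp : (2 - h / (β * s ^ 2)) * ((β * s ^ 2) * P) = (2 * (β * s ^ 2) - h) * P := by
          field_simp
        rw [hexp]
        exact hQup
      linarith
    · have h2 : h / (β * s ^ 2) ≤ h * Q / ((β * s ^ 2) * P) := by
        rw [div_le_div_iff₀ (by positivity) hσ2P]
        nlinarith [mul_nonneg (mul_nonneg hh0.le (mul_nonneg hβ0.le (sq_nonneg s)))
          (sub_nonneg.2 hPQ)]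
      linarith
  calc |(1 - h * (β * s ^ 2)⁻¹ + h * β⁻¹ * (1 + (β * s ^ 2)⁻¹ * T) ^ 2 /
        (ζ ^ 2 - T ^ 2 * (β ^ 2)⁻¹ / ζ ^ 2 + 2 * T * β⁻¹ * (1 + (β * s ^ 2)⁻¹ * T))) * ζ - s|
      = |ζ - s| * |1 - h * Q / ((β * s ^ 2) * P)| := by rw [hid, abs_mul]
    _ ≤ |ζ - s| * (1 - h / (β * s ^ 2)) := mul_le_mul_of_nonneg_left hW (abs_nonneg _)
    _ = (1 - h / (β * s ^ 2)) * |ζ - s| := by ring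

set_option maxHeartbeats 800000 in
/-- scalar core of Theorem 4.3 of the paper: linear convergence of the
TT-BRWP standard-deviation iteration to the unbiased steady state `σ/√β`. -/
theorem ttbrwp_sigma_linear_convergence (σ β T h : ℝ) (hσ : 0 < σ) (hβ : 1 ≤ β)
    (hT : T ∈ Set.Icc 0 (σ ^ 2 / 4)) (hh : h ∈ Set.Icc 0 (σ ^ 2 / 4)) (hh0 : 0 < h)
    (φ : ℝ → ℝ)
    (hφ : ∀ ζ : ℝ, 0 < ζ → φ ζ =
      (1 - h * (σ ^ 2)⁻¹ + h * β⁻¹ * (1 + (σ ^ 2)⁻¹ * T) ^ 2 /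
        (ζ ^ 2 - T ^ 2 * (β ^ 2)⁻¹ / ζ ^ 2 + 2 * T * β⁻¹ * (1 + (σ ^ 2)⁻¹ * T))) * ζ)
    (σk : ℕ → ℝ) (hinit : |Real.sqrt β * σk 0 - σ| ≤ σ / 2)
    (hrec : ∀ k, σk (k + 1) = φ (σk k)) :
    ∀ k, |σk k - σ / Real.sqrt β| ≤ (1 - h / σ ^ 2) ^ k * |σk 0 - σ / Real.sqrt β| := by
  obtain ⟨hT0, hT4⟩ := hT
  obtain ⟨-, hh4⟩ := hh
  have hβ0 : (0:ℝ) < β := lt_of_lt_of_le one_pos hβ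
  have hb1 : (1:ℝ) ≤ Real.sqrt β := by
    rw [show (1:ℝ) = Real.sqrt 1 by simp]
    exact Real.sqrt_le_sqrt hβ
  have hb0 : (0:ℝ) < Real.sqrt β := lt_of_lt_of_le one_pos hb1
  have hs0 : 0 < σ / Real.sqrt β := div_pos hσ hb0
  have hb2 : Real.sqrt β ^ 2 = β := Real.sq_sqrt (le_trans zero_le_one hβ)
  have hσ2 : σ ^ 2 = β * (σ / Real.sqrt β) ^ 2 := by
    rw [div_pow, hb2]
    field_simp
  have key : ∀ ζ : ℝ, |ζ - σ / Real.sqrt β| ≤ (σ / Real.sqrt β) / 2 →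
      |φ ζ - σ / Real.sqrt β| ≤ (1 - h / σ ^ 2) * |ζ - σ / Real.sqrt β| := by
    intro ζ hζ
    have hζ0 : 0 < ζ := by
      rw [abs_le] at hζ
      nlinarith [hζ.1]
    rw [hφ ζ hζ0]
    exact ttbrwp_key_step σ β T h (σ / Real.sqrt β) ζ hσ hβ0 hT0 hT4 hh0 hh4 hs0 hσ2 hζ
  have hc0 : 0 ≤ 1 - h / σ ^ 2 := by
    rw [sub_nonneg, div_le_one (by positivity)]
    nlinarith
  have hc1 : 1 - h / σ ^ 2 ≤ 1 := by
    have : 0 ≤ h / σ ^ 2 := by positivity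
    linarith
  have hinit' : |σk 0 - σ / Real.sqrt β| ≤ (σ / Real.sqrt β) / 2 := by
    have hbs : Real.sqrt β * σk 0 - σ = Real.sqrt β * (σk 0 - σ / Real.sqrt β) := by
      field_simp
    rw [hbs, abs_mul, abs_of_pos hb0] at hinit
    rw [div_div, le_div_iff₀ (by positivity)]
    calc |σk 0 - σ / Real.sqrt β| * (Real.sqrt β * 2)
        = Real.sqrt β * |σk 0 - σ / Real.sqrt β| * 2 := by ring
      _ ≤ (σ / 2) * 2 := by nlinarith
      _ = σ := by ring
  intro k
  induction k with
  | zero => simp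
  | succ n ih =>
    have hn : |σk n - σ / Real.sqrt β| ≤ (σ / Real.sqrt β) / 2 := by
      have hle1 : (1 - h / σ ^ 2) ^ n ≤ 1 := pow_le_one₀ hc0 hc1
      calc |σk n - σ / Real.sqrt β| ≤ (1 - h / σ ^ 2) ^ n * |σk 0 - σ / Real.sqrt β| := ih
        _ ≤ 1 * |σk 0 - σ / Real.sqrt β| := mul_le_mul_of_nonneg_right hle1 (abs_nonneg _)
        _ ≤ (σ / Real.sqrt β) / 2 := by rw [one_mul]; exact hinit'
    calc |σk (n + 1) - σ / Real.sqrt β| = |φ (σk n) - σ / Real.sqrt β| := by rw [hrec]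
      _ ≤ (1 - h / σ ^ 2) * |σk n - σ / Real.sqrt β| := key _ hn
      _ ≤ (1 - h / σ ^ 2) * ((1 - h / σ ^ 2) ^ n * |σk 0 - σ / Real.sqrt β|) :=
          mul_le_mul_of_nonneg_left ih hc0
      _ = (1 - h / σ ^ 2) ^ (n + 1) * |σk 0 - σ / Real.sqrt β| := by ring
end

section
/- Let Σ be a real symmetric positive definite d×d matrix and β > 0. Let Σ_t be a differentiable family of real symmetric d×d matrices satisfying the matrix ODE dΣ_t/dt = −Σ_t Σ⁻¹ − Σ⁻¹ Σ_t + 2β⁻¹ I. Then d/dt Tr((Σ_t − β⁻¹Σ)²) = −4 Tr((Σ_t − β⁻¹Σ) Σ⁻¹ (Σ_t − β⁻¹Σ)) ≤ 0; consequently, t ↦ ‖Σ_t − β⁻¹Σ‖_F is nonincreasing, where ‖·‖_F denotes the Frobenius norm. -/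
open Matrix

/-- Frobenius norm of a real square matrix. -/
noncomputable def frobNorm {d : ℕ} (A : Matrix (Fin d) (Fin d) ℝ) : ℝ :=
  Real.sqrt (∑ i, ∑ j, (A i j) ^ 2)

/-!
Writing `B_t = S_t - β⁻¹ Σ`, the `2β⁻¹ I` forcing term is exactly what the drift produces at the
equilibrium `β⁻¹ Σ`, so `B` solves the homogeneous Lyapunov equation `Ḃ = -(B Σ⁻¹ + Σ⁻¹ B)`.
Hence `d/dt Tr(B²) = 2 Tr(Ḃ B) = -4 Tr(B Σ⁻¹ B)`, which is `≤ 0` because `B Σ⁻¹ B = Bᴴ Σ⁻¹ B`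
is positive semidefinite; for symmetric `B`, `Tr(B²)` is the squared Frobenius norm.
-/

namespace Matrix

variable {m n : Type*} [Fintype m] [Fintype n]

theorem hasDerivAt_trace_mul {𝕜 : Type*} [NontriviallyNormedField 𝕜]
    {A : 𝕜 → Matrix m n 𝕜} {B : 𝕜 → Matrix n m 𝕜} {A' : Matrix m n 𝕜} {B' : Matrix n m 𝕜}
    {t : 𝕜} (hA : ∀ i j, HasDerivAt (fun s => A s i j) (A' i j) t)
    (hB : ∀ i j, HasDerivAt (fun s => B s i j) (B' i j) t) :
    HasDerivAt (fun s => (A s * B s).trace) (A' * B t + A t * B').trace t := by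
  simp only [trace, diag, mul_apply, add_apply, ← Finset.sum_add_distrib]
  exact HasDerivAt.fun_sum fun i _ => HasDerivAt.fun_sum fun j _ => (hA i j).mul (hB j i)

theorem trace_neg_mul_sub_mul_mul_add {R : Type*} [CommRing R] (B P : Matrix n n R) :
    ((-(B * P) - P * B) * B + B * (-(B * P) - P * B)).trace = -4 * (B * P * B).trace := by
  simp only [Matrix.sub_mul, Matrix.mul_sub, Matrix.neg_mul, Matrix.mul_neg, trace_add,
    trace_sub, trace_neg, ← Matrix.mul_assoc]
  rw [trace_mul_cycle B B P, trace_mul_cycle P B B]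
  ring

theorem neg_sub_smul_mul_inv_sub_inv_mul_sub_smul [DecidableEq n] {K : Type*} [Field K]
    {P : Matrix n n K} (hP : IsUnit P.det) (X : Matrix n n K) (c : K) :
    -((X - c • P) * P⁻¹) - P⁻¹ * (X - c • P) = -(X * P⁻¹) - P⁻¹ * X + (2 * c) • 1 := by
  simp only [Matrix.sub_mul, Matrix.mul_sub, Matrix.smul_mul, Matrix.mul_smul,
    mul_nonsing_inv P hP, nonsing_inv_mul P hP, two_mul, add_smul]
  abel

theorem trace_mul_mul_nonneg_of_posSemidef {R : Type*} [Ring R] [PartialOrder R] [StarRing R]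
    [AddLeftMono R] {B P : Matrix n n R} (hB : B.IsHermitian) (hP : P.PosSemidef) :
    0 ≤ (B * P * B).trace := by
  simpa only [hB.eq] using (hP.conjTranspose_mul_mul_same B).trace_nonneg

theorem hasDerivAt_trace_mul_self_of_lyapunov {𝕜 : Type*} [NontriviallyNormedField 𝕜]
    {B : 𝕜 → Matrix n n 𝕜} {P : Matrix n n 𝕜} {t : 𝕜}
    (hB : ∀ i j, HasDerivAt (fun s => B s i j) ((-(B t * P) - P * B t) i j) t) :
    HasDerivAt (fun s => (B s * B s).trace) (-4 * (B t * P * B t).trace) t := by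
  simpa only [trace_neg_mul_sub_mul_mul_add] using hasDerivAt_trace_mul hB hB

end Matrix

theorem frobNorm_eq_sqrt_trace_mul_transpose {d : ℕ} (A : Matrix (Fin d) (Fin d) ℝ) :
    frobNorm A = Real.sqrt (A * Aᵀ).trace := by
  simp only [frobNorm, trace, diag, mul_apply, transpose_apply, sq]

theorem ttbrwp_covariance_ode_decay_general {d : ℕ} (β : ℝ)
    (Sig : Matrix (Fin d) (Fin d) ℝ) (hSig : Sig.PosDef)
    (S : ℝ → Matrix (Fin d) (Fin d) ℝ)
    (hsymm : ∀ t, (S t).IsSymm)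
    (hode : ∀ t i j, HasDerivAt (fun s => S s i j)
      ((-(S t * Sig⁻¹) - Sig⁻¹ * S t + (2 * β⁻¹) • (1 : Matrix (Fin d) (Fin d) ℝ)) i j) t) :
    (∀ t, HasDerivAt (fun s => ((S s - β⁻¹ • Sig) * (S s - β⁻¹ • Sig)).trace)
        (-4 * ((S t - β⁻¹ • Sig) * Sig⁻¹ * (S t - β⁻¹ • Sig)).trace) t ∧
      -4 * ((S t - β⁻¹ • Sig) * Sig⁻¹ * (S t - β⁻¹ • Sig)).trace ≤ 0) ∧
    Antitone (fun t => frobNorm (S t - β⁻¹ • Sig)) := by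
  set B : ℝ → Matrix (Fin d) (Fin d) ℝ := fun t => S t - β⁻¹ • Sig
  have hBsymm : ∀ t, (B t).IsSymm := fun t =>
    (hsymm t).sub ((isHermitian_iff_isSymm.mp hSig.isHermitian).smul _)
  have hderiv : ∀ t, HasDerivAt (fun s => (B s * B s).trace) (-4 * (B t * Sig⁻¹ * B t).trace) t :=
    fun t => hasDerivAt_trace_mul_self_of_lyapunov fun i j => by
      rw [neg_sub_smul_mul_inv_sub_inv_mul_sub_smul hSig.det_pos.ne'.isUnit]
      exact (hode t i j).sub_const _
  have hnonpos : ∀ t, -4 * (B t * Sig⁻¹ * B t).trace ≤ 0 := fun t => by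
    have := trace_mul_mul_nonneg_of_posSemidef
      (isHermitian_iff_isSymm.mpr (hBsymm t)) hSig.inv.posSemidef
    linarith
  have hdecay : Antitone fun t => (B t * B t).trace :=
    antitone_of_deriv_nonpos (fun t => (hderiv t).differentiableAt)
      fun t => (hderiv t).deriv ▸ hnonpos t
  refine ⟨fun t => ⟨hderiv t, hnonpos t⟩, fun a b hab => ?_⟩
  show frobNorm (B b) ≤ frobNorm (B a)
  rw [frobNorm_eq_sqrt_trace_mul_transpose, frobNorm_eq_sqrt_trace_mul_transpose, (hBsymm a).eq,
    (hBsymm b).eq]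
  exact Real.sqrt_le_sqrt (hdecay hab)

/-- leading-order continuous-time analogue of Theorem 4.4 of the paper:
if the symmetric family `S t` solves `dS/dt = −S Σ⁻¹ − Σ⁻¹ S + 2β⁻¹ I` (entrywise),
then `d/dt Tr((S_t − β⁻¹Σ)²) = −4 Tr((S_t − β⁻¹Σ) Σ⁻¹ (S_t − β⁻¹Σ)) ≤ 0`, and the
Frobenius distance `t ↦ ‖S_t − β⁻¹Σ‖_F` is nonincreasing.  `Sig` plays the role of `Σ`. -/
theorem ttbrwp_covariance_ode_decay {d : ℕ} (β : ℝ) (hβ : 0 < β)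
    (Sig : Matrix (Fin d) (Fin d) ℝ) (hSig : Sig.PosDef) (hSigSymm : Sig.IsSymm)
    (S : ℝ → Matrix (Fin d) (Fin d) ℝ)
    (hsymm : ∀ t, (S t).IsSymm)
    (hode : ∀ t i j, HasDerivAt (fun s => S s i j)
      ((-(S t * Sig⁻¹) - Sig⁻¹ * S t + (2 * β⁻¹) • (1 : Matrix (Fin d) (Fin d) ℝ)) i j) t) :
    (∀ t, HasDerivAt (fun s => ((S s - β⁻¹ • Sig) * (S s - β⁻¹ • Sig)).trace)
        (-4 * ((S t - β⁻¹ • Sig) * Sig⁻¹ * (S t - β⁻¹ • Sig)).trace) t ∧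
      -4 * ((S t - β⁻¹ • Sig) * Sig⁻¹ * (S t - β⁻¹ • Sig)).trace ≤ 0) ∧
    Antitone (fun t => frobNorm (S t - β⁻¹ • Sig)) :=
  ttbrwp_covariance_ode_decay_general β Sig hSig S hsymm hode
end

section
/- Let σ > 0, 0 < h ≤ σ²/4, and 0 ≤ T ≤ σ²/(2 + 2√2). Then σ⁴ + 2Tσ² − T² > 0, and the sequence defined by m_{k+1} = (1 − h(T + σ²)/(σ⁴ + 2Tσ² − T²)) m_k satisfies |m_k| ≤ (1 − h/(2σ²))^k |m_0| for all k ≥ 0. -/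
/-- mean-convergence core of Theorem 4.6 of the paper: the mean recursion
of the TT-BRWP algorithm for the Bayesian inverse problem potential converges linearly at
rate `1 − h/(2σ²)`. -/
theorem ttbrwp_mean_linear_convergence (σ T h : ℝ) (hσ : 0 < σ)
    (hh0 : 0 < h) (hh : h ≤ σ ^ 2 / 4)
    (hT0 : 0 ≤ T) (hT : T ≤ σ ^ 2 / (2 + 2 * Real.sqrt 2))
    (m : ℕ → ℝ)
    (hrec : ∀ k, m (k + 1) =
      (1 - h * (T + σ ^ 2) / (σ ^ 4 + 2 * T * σ ^ 2 - T ^ 2)) * m k) :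
    0 < σ ^ 4 + 2 * T * σ ^ 2 - T ^ 2 ∧
    ∀ k, |m k| ≤ (1 - h / (2 * σ ^ 2)) ^ k * |m 0| := by
  have hs2 : (0:ℝ) < σ ^ 2 := by positivity
  have hsqrt : (1:ℝ) ≤ Real.sqrt 2 := by
    nlinarith [Real.sq_sqrt (by norm_num : (2:ℝ) ≥ 0), Real.sqrt_nonneg 2]
  have hTσ : T ≤ σ ^ 2 := by
    have h4 : (4:ℝ) ≤ 2 + 2 * Real.sqrt 2 := by linarith
    calc T ≤ σ ^ 2 / (2 + 2 * Real.sqrt 2) := hT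
      _ ≤ σ ^ 2 := by
        rw [div_le_iff₀ (by linarith)]
        nlinarith
  have hD : 0 < σ ^ 4 + 2 * T * σ ^ 2 - T ^ 2 := by nlinarith
  refine ⟨hD, ?_⟩
  set D := σ ^ 4 + 2 * T * σ ^ 2 - T ^ 2 with hDdef
  have hrabs : |1 - h * (T + σ ^ 2) / D| ≤ 1 - h / (2 * σ ^ 2) := by
    rw [abs_le]
    constructor
    · -- need h*(T+σ²)/D ≤ 2 - h/(2σ²); use (T+σ²)/D ≤ 1/σ² so h*(T+σ²)/D ≤ 1/4
      have hle : h * (T + σ ^ 2) / D ≤ 1 / 4 := by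
        rw [div_le_iff₀ hD]
        nlinarith [mul_nonneg hh0.le hT0, mul_nonneg hT0 hs2.le]
      have : h / (2 * σ ^ 2) ≤ 1 / 8 := by
        rw [div_le_div_iff₀ (by positivity) (by norm_num)]
        nlinarith
      linarith
    · -- need h/(2σ²) ≤ h*(T+σ²)/D
      have : h / (2 * σ ^ 2) ≤ h * (T + σ ^ 2) / D := by
        rw [div_le_div_iff₀ (by positivity) hD]
        nlinarith [hDdef, mul_nonneg hh0.le (sq_nonneg T),
          mul_nonneg hh0.le (pow_nonneg hσ.le 4)]
      linarith
  have hr0 : 0 ≤ 1 - h / (2 * σ ^ 2) := by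
    have : h / (2 * σ ^ 2) ≤ 1 / 8 := by
      rw [div_le_div_iff₀ (by positivity) (by norm_num)]
      nlinarith
    linarith
  intro k
  induction k with
  | zero => simp
  | succ n ih =>
    rw [hrec n, abs_mul, pow_succ]
    calc |1 - h * (T + σ ^ 2) / D| * |m n|
        ≤ (1 - h / (2 * σ ^ 2)) * ((1 - h / (2 * σ ^ 2)) ^ n * |m 0|) := by
          apply mul_le_mul hrabs ih (abs_nonneg _) hr0
      _ = (1 - h / (2 * σ ^ 2)) ^ n * (1 - h / (2 * σ ^ 2)) * |m 0| := by ring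
end
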